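/- Let v : [0,π] → ℂ be continuous and let λ ∈ ℂ with λ ≠ 0 and sin(λπ/2) ≠ 0. Define y(x) = −(1/(2λ sin(πλ/2)))·[ ∫₀^x cos λ(π/2 − x + t) v(t) dt + ∫ₓ^π cos λ(π/2 − t + x) v(t) dt ]. Then ∫₀^π y(x) conj(v(x)) dx = −(1/(4λ sin(λπ/2)))·{ e^{iλπ/2}·[ ṽ(−λ)ṽ*(−λ) − (1 − e^{-iλπ})Φ(−λ) ] + e^{-iλπ/2}·[ ṽ(λ)ṽ*(λ) − (1 − e^{iλπ})Φ(λ) ] }. -/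

import Mathlib

open MeasureTheory intervalIntegral

/-- Fourier transform `ṽ(λ) = ∫₀^π e^{-iλx} v(x) dx`. -/
noncomputable def ftilde (v : ℝ → ℂ) (l : ℂ) : ℂ :=
  ∫ x in (0:ℝ)..Real.pi, Complex.exp (-Complex.I * l * x) * v x

/-- `ṽ*(λ) = conj(ṽ(conj λ))`. -/
noncomputable def ftildeStar (v : ℝ → ℂ) (l : ℂ) : ℂ :=
  (starRingEnd ℂ) (ftilde v ((starRingEnd ℂ) l))

/-- `Φ(λ) = ∫₀^π (∫₀^x e^{-iλ(x−t)} conj(v(t)) dt) v(x) dx`. -/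
noncomputable def PhiFun (v : ℝ → ℂ) (l : ℂ) : ℂ :=
  ∫ x in (0:ℝ)..Real.pi,
    (∫ t in (0:ℝ)..x, Complex.exp (-Complex.I * l * (x - t)) * (starRingEnd ℂ) (v t)) * v x

/-- The resolvent of `L₀y = −y''` with periodic boundary conditions applied to `v`. -/
noncomputable def resolventFun (v : ℝ → ℂ) (l : ℂ) (x : ℝ) : ℂ :=
  -(1 / (2 * l * Complex.sin ((Real.pi : ℂ) * l / 2))) *
    ((∫ t in (0:ℝ)..x, Complex.cos (l * ((Real.pi : ℂ) / 2 - x + t)) * v t)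
      + ∫ t in x..Real.pi, Complex.cos (l * ((Real.pi : ℂ) / 2 - t + x)) * v t)

/-!
Writing `cos` as a sum of two exponentials splits `y(x) · conj v(x)` into terms
`(∫₀^x e^{-iμt} v(t) dt) · e^{iμx} conj v(x)` and the same with `∫ₓ^π`, for `μ = ±λ`.
Their integrals over `x` are the double integrals of `e^{-iμ(t-x)} v(t) conj v(x)` over the
triangles `t < x` and `t > x`. Integration by parts against the primitives shows that the
triangle `t > x` gives `Φ(μ)`, while both triangles together give `ṽ(μ) ṽ*(μ)`. The factors
`1 - e^{∓iλπ}` come from `e^{±iλπ/2} e^{∓iλπ} = e^{∓iλπ/2}`.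
-/

open Set Complex ComplexConjugate
open scoped Interval

section Primitive

variable {𝕜 : Type*} [RCLike 𝕜] {f g : ℝ → 𝕜} {a b : ℝ}

theorem hasDerivAt_primitive_of_mem_Ioo (hf : ContinuousOn f [[a, b]]) {x : ℝ}
    (hx : x ∈ Ioo (min a b) (max a b)) : HasDerivAt (fun y => ∫ t in a..y, f t) (f x) x :=
  integral_hasDerivAt_right
    (hf.mono (uIcc_subset_uIcc_left (Ioo_subset_Icc_self hx))).intervalIntegrable
    ((hf.mono Ioo_subset_Icc_self).stronglyMeasurableAtFilter isOpen_Ioo x hx)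
    (hf.continuousAt (Filter.mem_of_superset (Ioo_mem_nhds hx.1 hx.2) Ioo_subset_Icc_self))

theorem integral_primitive_mul (hf : ContinuousOn f [[a, b]]) (hg : ContinuousOn g [[a, b]]) :
    ∫ x in a..b, (∫ t in a..x, f t) * g x
      = (∫ x in a..b, f x) * (∫ x in a..b, g x) - ∫ x in a..b, f x * ∫ t in a..x, g t := by
  simpa using integral_mul_deriv_eq_deriv_mul_of_hasDerivAt
    (continuousOn_primitive_interval hf.integrableOn_uIcc)
    (continuousOn_primitive_interval hg.integrableOn_uIcc)
    (fun x hx => hasDerivAt_primitive_of_mem_Ioo hf hx)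
    (fun x hx => hasDerivAt_primitive_of_mem_Ioo hg hx)
    hf.intervalIntegrable hg.intervalIntegrable

theorem integral_primitive_left_mul (hf : ContinuousOn f [[a, b]])
    (hg : ContinuousOn g [[a, b]]) :
    ∫ x in a..b, (∫ t in x..b, f t) * g x = ∫ x in a..b, f x * ∫ t in a..x, g t := by
  have hsplit : EqOn (fun x => (∫ t in x..b, f t) * g x)
      (fun x => (∫ t in a..b, f t) * g x - (∫ t in a..x, f t) * g x) [[a, b]] := fun x hx => by
    dsimp only
    rw [← sub_mul, integral_interval_sub_left hf.intervalIntegrable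
      (hf.mono (uIcc_subset_uIcc_left hx)).intervalIntegrable]
  have hprod : IntervalIntegrable (fun x => (∫ t in a..x, f t) * g x) volume a b :=
    ((continuousOn_primitive_interval hf.integrableOn_uIcc).mul hg).intervalIntegrable
  rw [integral_congr hsplit, integral_sub (hg.intervalIntegrable.const_mul _) hprod,
    intervalIntegral.integral_const_mul, integral_primitive_mul hf hg, sub_sub_cancel]

end Primitive

section Cosine

variable {v : ℝ → ℂ} {a b : ℝ}

theorem integral_cos_mul_sub_add (hv : IntervalIntegrable v volume a b) (l c : ℂ) (x : ℝ) :
    ∫ t in a..b, cos (l * (c - x + t)) * v t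
      = (cexp (I * l * c) * cexp (I * -l * x) * ∫ t in a..b, cexp (-I * -l * t) * v t)
          / 2
        + (cexp (-I * l * c) * cexp (I * l * x) * ∫ t in a..b, cexp (-I * l * t) * v t)
          / 2 := by
  have hcos : ∀ t : ℝ, cos (l * (c - x + t)) * v t
      = cexp (I * l * c) * cexp (I * -l * x) / 2 * (cexp (-I * -l * t) * v t)
        + cexp (-I * l * c) * cexp (I * l * x) / 2 * (cexp (-I * l * t) * v t) := fun t => by
    rw [cos, show l * (c - x + t) * I = I * l * c + I * -l * x + -I * -l * t by ring,
      show -(l * (c - x + t)) * I = -I * l * c + I * l * x + -I * l * t by ring]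
    simp only [exp_add]
    ring
  simp_rw [hcos]
  rw [integral_add ((hv.continuousOn_mul (by fun_prop)).const_mul _)
      ((hv.continuousOn_mul (by fun_prop)).const_mul _),
    intervalIntegral.integral_const_mul, intervalIntegral.integral_const_mul]
  ring

theorem integral_cos_mul_sub_add' (hv : IntervalIntegrable v volume a b) (l c : ℂ) (x : ℝ) :
    ∫ t in a..b, cos (l * (c - t + x)) * v t
      = (cexp (I * l * c) * cexp (I * l * x) * ∫ t in a..b, cexp (-I * l * t) * v t) / 2
        + (cexp (-I * l * c) * cexp (I * -l * x) * ∫ t in a..b, cexp (-I * -l * t) * v t)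
          / 2 := by
  have hcos : ∀ t : ℝ, cos (l * (c - t + x)) * v t
      = cexp (I * l * c) * cexp (I * l * x) / 2 * (cexp (-I * l * t) * v t)
        + cexp (-I * l * c) * cexp (I * -l * x) / 2 * (cexp (-I * -l * t) * v t) := fun t => by
    rw [cos, show l * (c - t + x) * I = I * l * c + I * l * x + -I * l * t by ring,
      show -(l * (c - t + x)) * I = -I * l * c + I * -l * x + -I * -l * t by ring]
    simp only [exp_add]
    ring
  simp_rw [hcos]
  rw [integral_add ((hv.continuousOn_mul (by fun_prop)).const_mul _)
      ((hv.continuousOn_mul (by fun_prop)).const_mul _),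
    intervalIntegral.integral_const_mul, intervalIntegral.integral_const_mul]
  ring

end Cosine

theorem exp_neg_I_mul_sub (μ z w : ℂ) :
    cexp (-I * μ * (z - w)) = cexp (-I * μ * z) * cexp (I * μ * w) := by
  rw [← exp_add]
  ring_nf

theorem ftildeStar_eq_integral (v : ℝ → ℂ) (μ : ℂ) :
    ftildeStar v μ = ∫ x in (0 : ℝ)..Real.pi, cexp (I * μ * x) * conj (v x) := by
  rw [ftildeStar, ftilde, ← intervalIntegral_conj]
  congr 1 with x
  rw [map_mul, ← exp_conj]
  simp

theorem PhiFun_eq_integral (v : ℝ → ℂ) (μ : ℂ) :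
    PhiFun v μ = ∫ x in (0 : ℝ)..Real.pi,
      (cexp (-I * μ * x) * v x) * ∫ t in (0 : ℝ)..x, cexp (I * μ * t) * conj (v t) := by
  unfold PhiFun
  congr 1 with x
  simp_rw [exp_neg_I_mul_sub, mul_assoc, intervalIntegral.integral_const_mul]
  ring

theorem ContinuousOn.cexp_mul {s : Set ℝ} {w : ℝ → ℂ} (hw : ContinuousOn w s) (c : ℂ) :
    ContinuousOn (fun t : ℝ => cexp (c * t) * w t) s := by
  fun_prop

/-- The `x`-integrand of the integral of `e^{-iμ(t-x)} v(t) conj v(x)` over the triangle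
`0 < t < x < π`, with the phase factored out of the inner integral. -/
noncomputable def lowerTriangle (v : ℝ → ℂ) (μ : ℂ) (x : ℝ) : ℂ :=
  (∫ t in (0 : ℝ)..x, cexp (-I * μ * t) * v t) * (cexp (I * μ * x) * conj (v x))

/-- The same over the triangle `0 < x < t < π`. -/
noncomputable def upperTriangle (v : ℝ → ℂ) (μ : ℂ) (x : ℝ) : ℂ :=
  (∫ t in x..Real.pi, cexp (-I * μ * t) * v t) * (cexp (I * μ * x) * conj (v x))

section Triangles

variable {v : ℝ → ℂ}

theorem integral_lowerTriangle (hv : ContinuousOn v (Icc 0 Real.pi)) (μ : ℂ) :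
    ∫ x in (0 : ℝ)..Real.pi, lowerTriangle v μ x
      = ftilde v μ * ftildeStar v μ - PhiFun v μ := by
  rw [← uIcc_of_le Real.pi_pos.le] at hv
  rw [ftildeStar_eq_integral, PhiFun_eq_integral]
  exact integral_primitive_mul (hv.cexp_mul _)
    ((continuous_conj.comp_continuousOn hv).cexp_mul _)

theorem integral_upperTriangle (hv : ContinuousOn v (Icc 0 Real.pi)) (μ : ℂ) :
    ∫ x in (0 : ℝ)..Real.pi, upperTriangle v μ x = PhiFun v μ := by
  rw [← uIcc_of_le Real.pi_pos.le] at hv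
  rw [PhiFun_eq_integral]
  exact integral_primitive_left_mul (hv.cexp_mul _)
    ((continuous_conj.comp_continuousOn hv).cexp_mul _)

theorem intervalIntegrable_lowerTriangle (hv : ContinuousOn v (Icc 0 Real.pi)) (μ : ℂ) :
    IntervalIntegrable (lowerTriangle v μ) volume 0 Real.pi := by
  rw [← uIcc_of_le Real.pi_pos.le] at hv
  exact ((continuousOn_primitive_interval (hv.cexp_mul _).integrableOn_uIcc).mul
    ((continuous_conj.comp_continuousOn hv).cexp_mul _)).intervalIntegrable

theorem intervalIntegrable_upperTriangle (hv : ContinuousOn v (Icc 0 Real.pi)) (μ : ℂ) :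
    IntervalIntegrable (upperTriangle v μ) volume 0 Real.pi := by
  rw [← uIcc_of_le Real.pi_pos.le] at hv
  exact ((continuousOn_primitive_interval_left (hv.cexp_mul _).integrableOn_uIcc).mul
    ((continuous_conj.comp_continuousOn hv).cexp_mul _)).intervalIntegrable

theorem resolventFun_mul_conj (hv : ContinuousOn v (Icc 0 Real.pi)) (l : ℂ) {x : ℝ}
    (hx : x ∈ Icc 0 Real.pi) :
    resolventFun v l x * conj (v x)
      = -(1 / (2 * l * sin (Real.pi * l / 2))) / 2 *
        (cexp (I * l * Real.pi / 2) * (lowerTriangle v (-l) x + upperTriangle v l x)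
          + cexp (-I * l * Real.pi / 2) * (lowerTriangle v l x + upperTriangle v (-l) x)) := by
  have hlow : IntervalIntegrable v volume 0 x :=
    (hv.mono (Icc_subset_Icc_right hx.2)).intervalIntegrable_of_Icc hx.1
  have hup : IntervalIntegrable v volume x Real.pi :=
    (hv.mono (Icc_subset_Icc_left hx.1)).intervalIntegrable_of_Icc hx.2
  rw [resolventFun, integral_cos_mul_sub_add hlow, integral_cos_mul_sub_add' hup,
    ← mul_div_assoc, ← mul_div_assoc]
  unfold lowerTriangle upperTriangle
  ring

end Triangles

theorem stmt13_general (v : ℝ → ℂ) (hv : ContinuousOn v (Set.Icc 0 Real.pi))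
    (l : ℂ) :
    ∫ x in (0:ℝ)..Real.pi, resolventFun v l x * (starRingEnd ℂ) (v x)
      = -(1 / (4 * l * Complex.sin (l * Real.pi / 2))) *
        (Complex.exp (Complex.I * l * Real.pi / 2) *
            (ftilde v (-l) * ftildeStar v (-l)
              - (1 - Complex.exp (-Complex.I * l * Real.pi)) * PhiFun v (-l))
          + Complex.exp (-Complex.I * l * Real.pi / 2) *
            (ftilde v l * ftildeStar v l
              - (1 - Complex.exp (Complex.I * l * Real.pi)) * PhiFun v l)) := by
  have hlow := intervalIntegrable_lowerTriangle hv
  have hup := intervalIntegrable_upperTriangle hv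
  have hpt : EqOn (fun x => resolventFun v l x * conj (v x)) _ [[0, Real.pi]] :=
    fun x hx => resolventFun_mul_conj hv l (uIcc_of_le Real.pi_pos.le ▸ hx)
  rw [integral_congr hpt, intervalIntegral.integral_const_mul,
    integral_add (((hlow _).add (hup _)).const_mul _) (((hlow _).add (hup _)).const_mul _),
    intervalIntegral.integral_const_mul, intervalIntegral.integral_const_mul,
    integral_add (hlow _) (hup _), integral_add (hlow _) (hup _),
    integral_lowerTriangle hv, integral_lowerTriangle hv,
    integral_upperTriangle hv, integral_upperTriangle hv]
  have h₁ : cexp (I * l * Real.pi / 2) * cexp (-I * l * Real.pi)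
      = cexp (-I * l * Real.pi / 2) := by
    rw [← exp_add]
    ring_nf
  have h₂ : cexp (-I * l * Real.pi / 2) * cexp (I * l * Real.pi)
      = cexp (I * l * Real.pi / 2) := by
    rw [← exp_add]
    ring_nf
  rw [mul_comm (Real.pi : ℂ) l]
  linear_combination (1 / (4 * l * sin (l * Real.pi / 2))) *
    (PhiFun v (-l) * h₁ + PhiFun v l * h₂)

theorem stmt13 (v : ℝ → ℂ) (hv : ContinuousOn v (Set.Icc 0 Real.pi))
    (l : ℂ) (hl : l ≠ 0) (hs : Complex.sin (l * Real.pi / 2) ≠ 0) :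
    ∫ x in (0:ℝ)..Real.pi, resolventFun v l x * (starRingEnd ℂ) (v x)
      = -(1 / (4 * l * Complex.sin (l * Real.pi / 2))) *
        (Complex.exp (Complex.I * l * Real.pi / 2) *
            (ftilde v (-l) * ftildeStar v (-l)
              - (1 - Complex.exp (-Complex.I * l * Real.pi)) * PhiFun v (-l))
          + Complex.exp (-Complex.I * l * Real.pi / 2) *
            (ftilde v l * ftildeStar v l
              - (1 - Complex.exp (Complex.I * l * Real.pi)) * PhiFun v l)) :=
  stmt13_general v hv l
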